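/- Assume m_0 is a positive integer satisfying m_0 = k − (Λ − m_0·θ, θ) + 1. Set A = ∑_{i=1}^r a_i, N = m_0·A, and let π: {1,…,N} → {1,…,r} be any map with card(π^{−1}(i)) = m_0·a_i for all i. Then ∑_{1≤i<j≤N} (α_{π(i)},α_{π(j)})/κ − ∑_{i=1}^{N} ∑_{s=1}^{n} (Λ_s,α_{π(i)})/κ = −m_0. -/
import Mathlib


/- STATEMENT 12 (Lemma 3.4.2, "resonance" computation).
`h*` is a complex vector space with a symmetric bilinear form, `α 1,…,α r` with
`(α_i,α_i) = 2a_i^∨/a_i`, `θ = ∑ a_i α_i`, `(θ,θ) = 2`, `g = ∑ a_i^∨ + 1`, `κ = k + g`.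
If the positive integer `m₀` satisfies `m₀ = k − (Λ − m₀θ, θ) + 1`, `N = m₀·A` with
`A = ∑ a_i`, and `π : [N] → [r]` has fibers of cardinality `m₀·a_i`, then
`∑_{i<j} (α_{π(i)},α_{π(j)})/κ − ∑_{i,s} (Λ_s,α_{π(i)})/κ = −m₀`. -/

theorem statement12 (H : Type) [AddCommGroup H] [Module ℂ H]
    (B : H →ₗ[ℂ] H →ₗ[ℂ] ℂ) (hB : ∀ x y, B x y = B y x)
    (r : ℕ) (hr : 0 < r) (α : Fin r → H)
    (acoef acov : Fin r → ℕ) (hacoef : ∀ i, 0 < acoef i) (hacov : ∀ i, 0 < acov i)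
    (hαα : ∀ i, B (α i) (α i) = 2 * (acov i : ℂ) / (acoef i : ℂ))
    (θ : H) (hθ : θ = ∑ i, (acoef i : ℂ) • α i) (hθθ : B θ θ = 2)
    (g : ℕ) (hg : g = (∑ i, acov i) + 1)
    (k : ℕ) (hk : 0 < k) (κ : ℂ) (hκ : κ = ((k : ℂ) + (g : ℂ)))
    (n : ℕ) (hn : 1 ≤ n) (Λs : Fin n → H) (Λ : H) (hΛ : Λ = ∑ s, Λs s)
    (m₀ : ℕ) (hm₀ : 0 < m₀)
    (hres : (m₀ : ℂ) = (k : ℂ) - B (Λ - (m₀ : ℂ) • θ) θ + 1)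
    (A N : ℕ) (hA : A = ∑ i, acoef i) (hN : N = m₀ * A)
    (π : Fin N → Fin r)
    (hπ : ∀ i, (Finset.univ.filter fun p => π p = i).card = m₀ * acoef i) :
    (∑ p : Fin N, ∑ q : Fin N, if p < q then B (α (π p)) (α (π q)) / κ else 0)
      - (∑ p : Fin N, ∑ s : Fin n, B (Λs s) (α (π p)) / κ)
      = -(m₀ : ℂ) := by
  classical
  -- A general fiberwise summation lemma
  have hfiber : ∀ (f : Fin r → ℂ),
      (∑ p : Fin N, f (π p)) = ∑ i : Fin r, ((m₀ : ℂ) * (acoef i : ℂ)) * f i := by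
    intro f
    rw [← Finset.sum_fiberwise' Finset.univ π f]
    refine Finset.sum_congr rfl fun i _ => ?_
    rw [Finset.sum_const, hπ i]
    push_cast [nsmul_eq_mul]
    ring
  have hfiberH : (∑ p : Fin N, α (π p)) = (m₀ : ℂ) • θ := by
    rw [← Finset.sum_fiberwise' Finset.univ π α, hθ, Finset.smul_sum]
    refine Finset.sum_congr rfl fun i _ => ?_
    rw [Finset.sum_const, hπ i, smul_smul, ← Nat.cast_smul_eq_nsmul ℂ, Nat.cast_mul]
  -- κ ≠ 0
  have hκ0 : κ ≠ 0 := by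
    rw [hκ]
    have : ((k + g : ℕ) : ℂ) ≠ 0 := Nat.cast_ne_zero.mpr (Nat.add_pos_left hk g).ne'
    push_cast at this
    exact this
  -- B Λ θ = k + m₀ + 1
  have hBθ : B ((m₀ : ℂ) • θ) θ = 2 * (m₀ : ℂ) := by
    rw [map_smul, LinearMap.smul_apply, hθθ, smul_eq_mul]; ring
  have hΛθ : B Λ θ = (k : ℂ) + (m₀ : ℂ) + 1 := by
    have := hres
    rw [map_sub, LinearMap.sub_apply, hBθ] at this
    linear_combination this
  -- Total double sum
  have hT : (∑ p : Fin N, ∑ q : Fin N, B (α (π p)) (α (π q)))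
      = 2 * (m₀ : ℂ) ^ 2 := by
    have : (∑ p : Fin N, ∑ q : Fin N, B (α (π p)) (α (π q)))
        = B (∑ p : Fin N, α (π p)) (∑ q : Fin N, α (π q)) := by
      simp only [map_sum, LinearMap.sum_apply]
      exact Finset.sum_comm
    rw [this, hfiberH]
    simp only [map_smul, LinearMap.smul_apply, smul_eq_mul, hθθ]
    ring
  -- Diagonal sum
  have hD : (∑ p : Fin N, B (α (π p)) (α (π p)))
      = 2 * (m₀ : ℂ) * ((g : ℂ) - 1) := by
    have := hfiber (fun i => B (α i) (α i))
    rw [this]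
    have : ∀ i : Fin r, ((m₀ : ℂ) * (acoef i : ℂ)) * B (α i) (α i)
        = 2 * (m₀ : ℂ) * (acov i : ℂ) := by
      intro i
      rw [hαα i]
      have h0 : (acoef i : ℂ) ≠ 0 := Nat.cast_ne_zero.mpr (hacoef i).ne'
      field_simp
    rw [Finset.sum_congr rfl fun i _ => this i, ← Finset.mul_sum]
    have : (∑ i : Fin r, (acov i : ℂ)) = (g : ℂ) - 1 := by
      rw [hg]; push_cast; ring
    rw [this]
  -- symmetry trick: twice strict-upper sum plus diagonal equals total
  have hsym : (∑ p : Fin N, ∑ q : Fin N, if p < q then B (α (π p)) (α (π q)) else 0) * 2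
      + (∑ p : Fin N, B (α (π p)) (α (π p)))
      = ∑ p : Fin N, ∑ q : Fin N, B (α (π p)) (α (π q)) := by
    have hsplit : (∑ p : Fin N, ∑ q : Fin N, B (α (π p)) (α (π q)))
        = (∑ p : Fin N, ∑ q : Fin N, if p < q then B (α (π p)) (α (π q)) else 0)
        + ((∑ p : Fin N, ∑ q : Fin N, if q < p then B (α (π p)) (α (π q)) else 0)
        + (∑ p : Fin N, ∑ q : Fin N, if p = q then B (α (π p)) (α (π q)) else 0)) := by
      rw [← Finset.sum_add_distrib, ← Finset.sum_add_distrib]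
      refine Finset.sum_congr rfl fun p _ => ?_
      rw [← Finset.sum_add_distrib, ← Finset.sum_add_distrib]
      refine Finset.sum_congr rfl fun q _ => ?_
      rcases lt_trichotomy p q with h | h | h
      · simp [h, h.ne, not_lt.mpr h.le]
      · simp [h]
      · simp [h, h.ne', not_lt.mpr h.le]
    have h2 : (∑ p : Fin N, ∑ q : Fin N, if q < p then B (α (π p)) (α (π q)) else 0)
        = ∑ p : Fin N, ∑ q : Fin N, if p < q then B (α (π p)) (α (π q)) else 0 := by
      rw [Finset.sum_comm]
      refine Finset.sum_congr rfl fun p _ => Finset.sum_congr rfl fun q _ => ?_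
      rw [hB]
    have h3 : (∑ p : Fin N, ∑ q : Fin N, if p = q then B (α (π p)) (α (π q)) else 0)
        = ∑ p : Fin N, B (α (π p)) (α (π p)) := by
      refine Finset.sum_congr rfl fun p _ => ?_
      simp [Finset.sum_ite_eq, eq_comm]
    rw [hsplit, h2, h3]; ring
  have hS1 : (∑ p : Fin N, ∑ q : Fin N, if p < q then B (α (π p)) (α (π q)) else 0)
      = (m₀ : ℂ) ^ 2 - (m₀ : ℂ) * ((g : ℂ) - 1) := by
    have := hsym
    rw [hT, hD] at this
    linear_combination this / 2
  -- second sum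
  have hS2 : (∑ p : Fin N, ∑ s : Fin n, B (Λs s) (α (π p)))
      = (m₀ : ℂ) * ((k : ℂ) + (m₀ : ℂ) + 1) := by
    rw [Finset.sum_comm]
    have : ∀ s : Fin n, (∑ p : Fin N, B (Λs s) (α (π p))) = B (Λs s) ((m₀ : ℂ) • θ) := by
      intro s
      rw [← map_sum, hfiberH]
    rw [Finset.sum_congr rfl fun s _ => this s, ← LinearMap.sum_apply, ← map_sum, ← hΛ,
      map_smul, smul_eq_mul, hΛθ]
  -- put it together
  have e1 : (∑ p : Fin N, ∑ q : Fin N, if p < q then B (α (π p)) (α (π q)) / κ else 0)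
      = (∑ p : Fin N, ∑ q : Fin N, if p < q then B (α (π p)) (α (π q)) else 0) / κ := by
    rw [Finset.sum_div]
    refine Finset.sum_congr rfl fun p _ => ?_
    rw [Finset.sum_div]
    exact Finset.sum_congr rfl fun q _ => by split <;> simp
  have e2 : (∑ p : Fin N, ∑ s : Fin n, B (Λs s) (α (π p)) / κ)
      = (∑ p : Fin N, ∑ s : Fin n, B (Λs s) (α (π p))) / κ := by
    rw [Finset.sum_div]
    exact Finset.sum_congr rfl fun p _ => (Finset.sum_div _ _ _).symm
  rw [e1, e2, hS1, hS2, div_sub_div_same, hκ]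
  have hκ0' : (k : ℂ) + (g : ℂ) ≠ 0 := by rw [← hκ]; exact hκ0
  field_simp
  ring
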